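/- Let Ω̂ be a real symmetric positive semidefinite n×n matrix with rank(Ω̂) = r < n, let Δ ∈ D_+^n be such that there exists Λ ∈ S_0^n with ‖Δ + Λ‖ < σ_r(Ω̂) and range(Δ + Λ) orthogonal to range(Ω̂), and suppose Σ := Ω̂ + Δ is positive definite. Then Ω̂ solves the reformulated Frisch–Kalman problem: Ω̂ is feasible (rank(Ω̂) ≤ r, Ω̂ positive semidefinite, Σ − Ω̂ positive semidefinite and diagonal), and for every real n×n matrix Ω with rank(Ω) ≤ r, Ω positive semidefinite, Σ − Ω positive semidefinite and Σ − Ω diagonal, one has ‖Σ − Ω‖_F² ≥ ‖Σ − Ω̂‖_F² = ‖Δ‖_F². -/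

import Mathlib

open Matrix

/-- The `k`-th largest singular value (1-indexed) of a real square matrix,
with junk value `0` when `k` is out of range. -/
noncomputable def sv {n : ℕ} (A : Matrix (Fin n) (Fin n) ℝ) (k : ℕ) : ℝ :=
  if h : k - 1 < n then
    (fun i => Real.sqrt ((show (Aᵀ * A).IsHermitian by
          rw [IsHermitian, conjTranspose_eq_transpose_of_trivial, transpose_mul, transpose_transpose]).eigenvalues i))
      (Tuple.sort (fun i : Fin n =>
        Real.sqrt ((show (Aᵀ * A).IsHermitian by
          rw [IsHermitian, conjTranspose_eq_transpose_of_trivial, transpose_mul, transpose_transpose]).eigenvalues i))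
        (Fin.rev ⟨k - 1, h⟩))
  else 0

/-- Operator (spectral) norm: the largest singular value. -/
noncomputable def opNorm {n : ℕ} (A : Matrix (Fin n) (Fin n) ℝ) : ℝ := sv A 1

/-- Frobenius norm. -/
noncomputable def frobNorm {n : ℕ} (A : Matrix (Fin n) (Fin n) ℝ) : ℝ :=
  Real.sqrt (∑ i, ∑ j, (A i j) ^ 2)

/-- The `r`-norm: square root of the sum of squares of the `r` largest singular values. -/
noncomputable def rNorm {n : ℕ} (A : Matrix (Fin n) (Fin n) ℝ) (r : ℕ) : ℝ :=
  Real.sqrt (∑ k ∈ Finset.range r, (sv A (k + 1)) ^ 2)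

/-- Frobenius (trace) inner product of square matrices. -/
noncomputable def minner {n : ℕ} (A B : Matrix (Fin n) (Fin n) ℝ) : ℝ :=
  (Aᵀ * B).trace

/-- The ranges (column spaces) of `A` and `B` are orthogonal. -/
def rangesOrth {n : ℕ} (A B : Matrix (Fin n) (Fin n) ℝ) : Prop :=
  ∀ x y : Fin n → ℝ, (A.mulVec x) ⬝ᵥ (B.mulVec y) = 0

/-!
Write `Σ - Ω = Δ + E` with `E = Ωh - Ω` diagonal. Since `Λ` vanishes on the diagonal and
`M = Δ + Λ` annihilates `Ωh`, `⟪Δ, E⟫ = ⟪M, E⟫ = -tr (M Ω)`, so it suffices to show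
`‖Ωh - Ω‖² ≥ 2 tr (M Ω)`.

Let `σ = σ_r(Ωh)`. The eigenvalues of `Ωhᵀ Ωh` are the squares of those of `Ωh` (compare
characteristic polynomials), so all `r` nonzero eigenvalues of `Ωh` are at least `σ`. Let `N` be
the projection onto `ker Ωh`. As `M = N M N ≤ σ`, `tr (M Ω) ≤ σ tr (Ω N)`. The matrix
`K = Ωh + σ N` satisfies `K² ≥ σ²` and
`‖Ωh - Ω‖² - 2σ tr (Ω N) = ‖Ω - K‖² - σ² (n - r)`,
while `‖Ω - K‖² ≥ ‖(Ω - K) Q‖² = ‖K Q‖² ≥ σ² tr Q` for the projection `Q` onto `ker Ω`, whose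
trace is `n - rank Ω ≥ n - r`.
-/

open Finset
open scoped MatrixOrder

namespace Tuple

variable {n : ℕ} {α : Type*} [LinearOrder α]

lemma le_card_filter_apply_sort_rev_le (f : Fin n → α) (k : Fin n) :
    (k : ℕ) + 1 ≤ #{i | f (sort f k.rev) ≤ f i} := by
  have hmaps : ∀ j ∈ Ici k.rev, sort f j ∈ ({i | f (sort f k.rev) ≤ f i} : Finset _) :=
    fun j hj => by simpa using monotone_sort f (mem_Ici.mp hj)
  calc (k : ℕ) + 1 = #(Ici k.rev) := by rw [Fin.card_Ici, Fin.val_rev]; omega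
    _ ≤ _ := card_le_card_of_injOn _ hmaps (sort f).injective.injOn

lemma apply_le_apply_sort_rev_zero (f : Fin n → α) (i : Fin n) :
    f i ≤ f (sort f (Fin.rev ⟨0, i.pos⟩)) := by
  conv_lhs => rw [← (sort f).apply_symm_apply i]
  exact monotone_sort f (Fin.le_rev_iff.mpr (Nat.zero_le _))

end Tuple

namespace Matrix

section KerProj

variable {m : Type*} [Fintype m] [DecidableEq m]

lemma continuousOn_spectrum (A : Matrix m m ℝ) (f : ℝ → ℝ) :
    ContinuousOn f (spectrum ℝ A) :=
  finite_real_spectrum.continuousOn f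

lemma trace_cfc {A : Matrix m m ℝ} (hA : A.IsHermitian) (f : ℝ → ℝ) :
    (cfc f A).trace = ∑ i, f (hA.eigenvalues i) := by
  rw [hA.cfc_eq, IsHermitian.cfc, Unitary.conjStarAlgAut_apply, trace_mul_cycle]
  simp [trace_diagonal]

lemma trace_mul_nonneg {X Y : Matrix m m ℝ} (hX : 0 ≤ X) (hY : 0 ≤ Y) :
    0 ≤ (X * Y).trace := by
  obtain ⟨B, rfl⟩ := CStarAlgebra.nonneg_iff_eq_star_mul_self.mp hX
  rw [Matrix.mul_assoc, trace_mul_comm, star_eq_conjTranspose]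
  exact (hY.posSemidef.mul_mul_conjTranspose_same B).trace_nonneg

lemma trace_mul_le_trace_mul {X Y Z : Matrix m m ℝ} (hXY : X ≤ Y) (hZ : 0 ≤ Z) :
    (X * Z).trace ≤ (Y * Z).trace := by
  have := trace_mul_nonneg (sub_nonneg.mpr hXY) hZ
  rwa [Matrix.sub_mul, trace_sub, sub_nonneg] at this

noncomputable def kerProj (A : Matrix m m ℝ) : Matrix m m ℝ :=
  cfc (fun x : ℝ => if x = 0 then 1 else 0) A

variable {A : Matrix m m ℝ}

lemma kerProj_mul_self (A : Matrix m m ℝ) : kerProj A * kerProj A = kerProj A := by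
  rw [kerProj, ← cfc_mul _ _ A (continuousOn_spectrum A _) (continuousOn_spectrum A _)]
  exact cfc_congr fun x _ => by split_ifs <;> simp

lemma mul_kerProj (hA : A.IsHermitian) : A * kerProj A = 0 := by
  nth_rw 1 [← cfc_id' ℝ A hA.isSelfAdjoint]
  rw [kerProj, ← cfc_mul _ _ A (continuousOn_spectrum A _) (continuousOn_spectrum A _),
    ← cfc_zero ℝ A]
  exact cfc_congr fun x _ => by split_ifs <;> simp_all

lemma isHermitian_kerProj (A : Matrix m m ℝ) : (kerProj A).IsHermitian :=
  IsSelfAdjoint.isHermitian (cfc_predicate _ A)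

lemma kerProj_nonneg (A : Matrix m m ℝ) : 0 ≤ kerProj A :=
  cfc_nonneg fun x _ => by split_ifs <;> norm_num

lemma kerProj_le_one (hA : A.IsHermitian) : kerProj A ≤ 1 :=
  (cfc_le_one_iff _ A (continuousOn_spectrum A _)).mpr fun x _ => by split_ifs <;> norm_num

lemma trace_kerProj (hA : A.IsHermitian) :
    (kerProj A).trace = Fintype.card m - A.rank := by
  have hcard := Finset.card_filter_add_card_filter_not (s := univ)
    (fun i => hA.eigenvalues i = 0)
  rw [kerProj, trace_cfc hA, hA.rank_eq_card_non_zero_eigs, Fintype.card_subtype,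
    Finset.sum_boole, ← Finset.card_univ, ← hcard]
  push_cast
  ring

lemma mul_kerProj_of_mul_eq_zero (hA : A.IsHermitian) {M : Matrix m m ℝ} (hMA : M * A = 0) :
    M * kerProj A = M := by
  have hinv : A * cfc (fun x : ℝ => x⁻¹) A = 1 - kerProj A := by
    nth_rw 1 [← cfc_id' ℝ A hA.isSelfAdjoint]
    rw [← cfc_mul _ _ A (continuousOn_spectrum A _) (continuousOn_spectrum A _),
      kerProj, ← cfc_one ℝ A hA.isSelfAdjoint,
      ← cfc_sub _ _ A (continuousOn_spectrum A _) (continuousOn_spectrum A _)]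
    exact cfc_congr fun x _ => by by_cases hx : x = 0 <;> simp [hx]
  calc M * kerProj A = M - M * A * cfc (fun x : ℝ => x⁻¹) A := by
        rw [Matrix.mul_assoc, hinv, Matrix.mul_sub, Matrix.mul_one, sub_sub_cancel]
    _ = M := by rw [hMA, Matrix.zero_mul, sub_zero]

lemma sq_smul_one_le_mul_self_add_smul_kerProj (hA : A.IsHermitian) {σ : ℝ} (hσ : 0 ≤ σ)
    (hspec : ∀ x ∈ spectrum ℝ A, x ≠ 0 → σ ≤ x) :
    σ ^ 2 • 1 ≤ (A + σ • kerProj A) * (A + σ • kerProj A) := by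
  have hK : A + σ • kerProj A = cfc (fun x => if x = 0 then σ else x) A := by
    nth_rw 1 [← cfc_id' ℝ A hA.isSelfAdjoint]
    rw [kerProj, ← cfc_const_mul _ _ A (continuousOn_spectrum A _),
      ← cfc_add A _ _ (continuousOn_spectrum A _) (continuousOn_spectrum A _)]
    exact cfc_congr fun x _ => by by_cases hx : x = 0 <;> simp [hx]
  rw [hK, ← cfc_mul _ _ A (continuousOn_spectrum A _) (continuousOn_spectrum A _),
    ← Algebra.algebraMap_eq_smul_one,
    algebraMap_le_cfc_iff _ _ A (continuousOn_spectrum A _) hA.isSelfAdjoint]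
  intro x hx
  by_cases hx0 : x = 0
  · simp [hx0, sq]
  · simpa [hx0, sq] using mul_self_le_mul_self hσ (hspec x hx hx0)

lemma trace_mul_le_mul_trace_mul_kerProj (hA : A.IsHermitian) {M B : Matrix m m ℝ}
    (hM : M.IsHermitian) (hMA : M * A = 0) {σ : ℝ} (hMσ : M ≤ σ • 1) (hB : 0 ≤ B) :
    (M * B).trace ≤ σ * (B * kerProj A).trace := by
  set N := kerProj A
  have hMN : M * N = M := mul_kerProj_of_mul_eq_zero hA hMA
  have hNM : N * M = M := by
    have := congrArg conjTranspose hMN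
    rwa [conjTranspose_mul, hM.eq, (isHermitian_kerProj A).eq] at this
  have hNBN : 0 ≤ N * B * N := by
    have := star_left_conjugate_nonneg hB N
    rwa [star_eq_conjTranspose, (isHermitian_kerProj A).eq] at this
  calc (M * B).trace = (N * M * N * B).trace := by rw [hNM, hMN]
    _ = (M * (N * B * N)).trace := by
        rw [Matrix.mul_assoc, Matrix.mul_assoc, trace_mul_comm]
        simp only [Matrix.mul_assoc]
    _ ≤ (σ • 1 * (N * B * N)).trace := trace_mul_le_trace_mul hMσ hNBN
    _ = σ * (B * N).trace := by
        rw [Matrix.smul_mul, Matrix.one_mul, trace_smul, smul_eq_mul, Matrix.mul_assoc,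
          trace_mul_comm, Matrix.mul_assoc, kerProj_mul_self]

lemma trace_mul_kerProj_eq (A Y : Matrix m m ℝ) :
    (Y * kerProj A).trace = (kerProj A * Y * kerProj A).trace := by
  rw [trace_mul_comm (kerProj A * Y), ← Matrix.mul_assoc, kerProj_mul_self, trace_mul_comm]

lemma sq_mul_card_sub_rank_le {B K : Matrix m m ℝ} (hB : 0 ≤ B) (hK : K.IsHermitian) {σ : ℝ}
    (hKσ : σ ^ 2 • 1 ≤ K * K) :
    σ ^ 2 * (Fintype.card m - B.rank) ≤ ((B - K) * (B - K)).trace := by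
  have hBh : B.IsHermitian := hB.posSemidef.isHermitian
  set Q := kerProj B
  set X := B - K
  have hXh : X.IsHermitian := hBh.sub hK
  have hXX : 0 ≤ X * X := by
    simpa only [star_eq_conjTranspose, hXh.eq] using star_mul_self_nonneg X
  have hXQ : X * Q = -(K * Q) := by
    rw [Matrix.sub_mul, show B * Q = 0 from mul_kerProj hBh, zero_sub]
  have hQX : Q * X = -(Q * K) := by
    have := congrArg conjTranspose hXQ
    rwa [conjTranspose_mul, conjTranspose_neg, conjTranspose_mul, hXh.eq,
      (isHermitian_kerProj B).eq, hK.eq] at this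
  calc σ ^ 2 * (Fintype.card m - B.rank) = (σ ^ 2 • 1 * Q).trace := by
        rw [Matrix.smul_mul, Matrix.one_mul, trace_smul, trace_kerProj hBh, smul_eq_mul]
    _ ≤ (K * K * Q).trace := trace_mul_le_trace_mul hKσ (kerProj_nonneg B)
    _ = (X * X * Q).trace := by
        rw [trace_mul_kerProj_eq, trace_mul_kerProj_eq B (X * X)]
        simp only [← Matrix.mul_assoc]
        rw [Matrix.mul_assoc (Q * X), Matrix.mul_assoc (Q * K), hQX, hXQ, neg_mul_neg]
    _ ≤ (X * X).trace := by
        have := trace_mul_nonneg hXX (sub_nonneg.mpr (kerProj_le_one hBh))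
        rwa [Matrix.mul_sub, Matrix.mul_one, trace_sub, sub_nonneg] at this

lemma two_mul_trace_mul_kerProj_le (hA : A.IsHermitian) {σ : ℝ} (hσ : 0 ≤ σ)
    (hspec : ∀ x ∈ spectrum ℝ A, x ≠ 0 → σ ≤ x) {B : Matrix m m ℝ} (hB : 0 ≤ B)
    (hrank : B.rank ≤ A.rank) :
    2 * σ * (B * kerProj A).trace ≤ ((A - B) * (A - B)).trace := by
  set N := kerProj A
  have hlow := sq_mul_card_sub_rank_le hB (hA.add ((isHermitian_kerProj A).smul (.all σ)))
    (sq_smul_one_le_mul_self_add_smul_kerProj hA hσ hspec)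
  have hexpand : ((B - (A + σ • N)) * (B - (A + σ • N))).trace =
      ((A - B) * (A - B)).trace - 2 * σ * (B * N).trace
        + σ ^ 2 * (Fintype.card m - A.rank) := by
    have hAN : A * N = 0 := mul_kerProj hA
    have hNA : N * A = 0 := by
      have := congrArg conjTranspose hAN
      rwa [conjTranspose_mul, hA.eq, (isHermitian_kerProj A).eq, conjTranspose_zero] at this
    have hNN : N * N = N := kerProj_mul_self A
    have htrN : N.trace = Fintype.card m - A.rank := trace_kerProj hA
    rw [show B - (A + σ • N) = -((A - B) + σ • N) by abel, neg_mul_neg]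
    simp only [Matrix.add_mul, Matrix.mul_add, Matrix.smul_mul, Matrix.mul_smul, Matrix.sub_mul,
      Matrix.mul_sub, trace_add, trace_sub, trace_smul, smul_eq_mul, hAN, hNA, hNN, trace_zero,
      htrN]
    rw [trace_mul_comm N B]
    ring
  have hrank' : (B.rank : ℝ) ≤ A.rank := by exact_mod_cast hrank
  nlinarith [mul_nonneg (sq_nonneg σ) (sub_nonneg.mpr hrank')]

end KerProj

section SingularValues

variable {n : ℕ}

lemma isHermitian_transpose_mul_self (A : Matrix (Fin n) (Fin n) ℝ) : (Aᵀ * A).IsHermitian := by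
  rw [IsHermitian, conjTranspose_eq_transpose_of_trivial, transpose_mul, transpose_transpose]

lemma eigenvalues_transpose_mul_self_nonneg (A : Matrix (Fin n) (Fin n) ℝ) (i : Fin n) :
    0 ≤ (isHermitian_transpose_mul_self A).eigenvalues i :=
  eigenvalues_conjTranspose_mul_self_nonneg A i

lemma sv_nonneg (A : Matrix (Fin n) (Fin n) ℝ) (k : ℕ) : 0 ≤ sv A k := by
  unfold sv
  split_ifs
  exacts [Real.sqrt_nonneg _, le_rfl]

lemma eigenvalues_transpose_mul_self_le_sv_one_sq (A : Matrix (Fin n) (Fin n) ℝ) (i : Fin n) :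
    (isHermitian_transpose_mul_self A).eigenvalues i ≤ sv A 1 ^ 2 := by
  rw [← Real.sqrt_le_left (sv_nonneg A 1), sv, dif_pos i.pos]
  exact Tuple.apply_le_apply_sort_rev_zero
    (fun j => √((isHermitian_transpose_mul_self A).eigenvalues j)) i

lemma le_card_filter_sv_sq_le_eigenvalues (A : Matrix (Fin n) (Fin n) ℝ) {k : ℕ}
    (hk₀ : 1 ≤ k) (hkn : k ≤ n) :
    k ≤ #{i | sv A k ^ 2 ≤ (isHermitian_transpose_mul_self A).eigenvalues i} := by
  have hk : k - 1 < n := by omega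
  have key := Tuple.le_card_filter_apply_sort_rev_le
    (fun i => √((isHermitian_transpose_mul_self A).eigenvalues i)) ⟨k - 1, hk⟩
  rw [Fin.val_mk, Nat.sub_add_cancel hk₀] at key
  refine key.trans (card_le_card fun i hi => ?_)
  simp only [mem_filter, mem_univ, true_and] at hi ⊢
  rw [sv, dif_pos hk]
  dsimp only
  rw [Real.sq_sqrt (eigenvalues_transpose_mul_self_nonneg A _)]
  exact (Real.sqrt_le_sqrt_iff (eigenvalues_transpose_mul_self_nonneg A i)).mp hi

lemma map_eigenvalues_transpose_mul_self {A : Matrix (Fin n) (Fin n) ℝ} (hA : A.IsHermitian) :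
    univ.val.map (isHermitian_transpose_mul_self A).eigenvalues =
      univ.val.map fun i => hA.eigenvalues i ^ 2 := by
  have hsq : Aᵀ * A = cfc (fun x : ℝ => x ^ 2) A := by
    rw [cfc_pow_id A 2 hA.isSelfAdjoint, sq, ← conjTranspose_eq_transpose_of_trivial, hA.eq]
  have h : (Aᵀ * A).charpoly.roots = univ.val.map fun i => hA.eigenvalues i ^ 2 := by
    rw [hsq, hA.charpoly_cfc_eq, Polynomial.roots_prod _ _
      (prod_ne_zero_iff.mpr fun i _ => Polynomial.X_sub_C_ne_zero _)]
    simp only [Polynomial.roots_X_sub_C, Multiset.bind_singleton]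
    rfl
  rw [(isHermitian_transpose_mul_self A).roots_charpoly_eq_eigenvalues] at h
  simpa using h

lemma card_filter_sq_le_eigenvalues_transpose_mul_self {A : Matrix (Fin n) (Fin n) ℝ}
    (hA : A.PosSemidef) {σ : ℝ} (hσ : 0 ≤ σ) :
    #{i | σ ^ 2 ≤ (isHermitian_transpose_mul_self A).eigenvalues i} =
      #{i | σ ≤ hA.1.eigenvalues i} := by
  calc #{i | σ ^ 2 ≤ (isHermitian_transpose_mul_self A).eigenvalues i}
      = (univ.val.map (isHermitian_transpose_mul_self A).eigenvalues).countP (σ ^ 2 ≤ ·) :=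
        by rw [Multiset.countP_map]; rfl
    _ = (univ.val.map fun i => hA.1.eigenvalues i ^ 2).countP (σ ^ 2 ≤ ·) := by
        rw [map_eigenvalues_transpose_mul_self hA.1]
    _ = #{i | σ ^ 2 ≤ hA.1.eigenvalues i ^ 2} := by rw [Multiset.countP_map]; rfl
    _ = #{i | σ ≤ hA.1.eigenvalues i} := by
        simp only [pow_le_pow_iff_left₀ hσ (hA.eigenvalues_nonneg _) two_ne_zero]

lemma sv_rank_le_of_mem_spectrum {A : Matrix (Fin n) (Fin n) ℝ} (hA : A.PosSemidef) {x : ℝ}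
    (hx : x ∈ spectrum ℝ A) (hx0 : x ≠ 0) : sv A A.rank ≤ x := by
  obtain ⟨i, rfl⟩ := hA.1.spectrum_real_eq_range_eigenvalues ▸ hx
  rcases (sv_nonneg A A.rank).eq_or_lt with hσ | hσ
  · exact hσ ▸ hA.eigenvalues_nonneg i
  have hrank : A.rank = #{j | hA.1.eigenvalues j ≠ 0} := by
    rw [hA.1.rank_eq_card_non_zero_eigs, Fintype.card_subtype]
  have hpos : 1 ≤ A.rank := by
    rw [hrank]
    exact card_pos.mpr ⟨i, by simpa using hx0⟩
  have hcount : A.rank ≤ #{j | sv A A.rank ≤ hA.1.eigenvalues j} := by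
    rw [← card_filter_sq_le_eigenvalues_transpose_mul_self hA hσ.le]
    exact le_card_filter_sv_sq_le_eigenvalues A hpos (rank_le_width A)
  have hsub : univ.filter (fun j => sv A A.rank ≤ hA.1.eigenvalues j) ⊆
      univ.filter (fun j => hA.1.eigenvalues j ≠ 0) := by
    intro j hj
    simp only [mem_filter, mem_univ, true_and] at hj ⊢
    exact (hσ.trans_le hj).ne'
  have heq := eq_of_subset_of_card_le hsub (hrank ▸ hcount)
  have hi : i ∈ univ.filter (fun j => hA.1.eigenvalues j ≠ 0) := by simpa using hx0
  rw [← heq] at hi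
  simpa using hi

lemma le_opNorm_smul_one {M : Matrix (Fin n) (Fin n) ℝ} (hM : M.IsHermitian) :
    M ≤ opNorm M • 1 := by
  rw [← Algebra.algebraMap_eq_smul_one, le_algebraMap_iff_spectrum_le hM.isSelfAdjoint]
  intro x hx
  have hsq : M ^ 2 = Mᵀ * M := by
    rw [sq, ← conjTranspose_eq_transpose_of_trivial, hM.eq]
  have hx2 := spectrum.pow_mem_pow M 2 hx
  rw [hsq, (isHermitian_transpose_mul_self M).spectrum_real_eq_range_eigenvalues] at hx2
  obtain ⟨i, hi⟩ := hx2
  refine (le_abs_self x).trans (abs_le_of_sq_le_sq ?_ (sv_nonneg M 1))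
  exact hi ▸ eigenvalues_transpose_mul_self_le_sv_one_sq M i

end SingularValues

section Frobenius

variable {n : ℕ}

lemma minner_eq_sum (A B : Matrix (Fin n) (Fin n) ℝ) :
    minner A B = ∑ i, ∑ j, A i j * B i j := by
  simp only [minner, trace, diag, mul_apply, transpose_apply]
  exact Finset.sum_comm

lemma minner_add_left (A B C : Matrix (Fin n) (Fin n) ℝ) :
    minner (A + B) C = minner A C + minner B C := by
  rw [minner, minner, minner, transpose_add, Matrix.add_mul, trace_add]

lemma frobNorm_sq (A : Matrix (Fin n) (Fin n) ℝ) : frobNorm A ^ 2 = minner A A := by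
  rw [frobNorm, Real.sq_sqrt (by positivity), minner_eq_sum]
  simp only [sq]

lemma frobNorm_add_sq (A B : Matrix (Fin n) (Fin n) ℝ) :
    frobNorm (A + B) ^ 2 = frobNorm A ^ 2 + 2 * minner A B + frobNorm B ^ 2 := by
  simp only [frobNorm_sq, minner_eq_sum, add_apply, Finset.mul_sum, ← Finset.sum_add_distrib]
  exact Finset.sum_congr rfl fun i _ => Finset.sum_congr rfl fun j _ => by ring

lemma minner_eq_zero_of_isDiag {Λ E : Matrix (Fin n) (Fin n) ℝ} (hΛ : ∀ i, Λ i i = 0)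
    (hE : E.IsDiag) : minner Λ E = 0 := by
  rw [minner_eq_sum]
  refine Finset.sum_eq_zero fun i _ => Finset.sum_eq_zero fun j _ => ?_
  by_cases hij : i = j
  · rw [hij, hΛ, zero_mul]
  · rw [hE hij, mul_zero]

lemma rangesOrth_iff {A B : Matrix (Fin n) (Fin n) ℝ} : rangesOrth A B ↔ Aᵀ * B = 0 := by
  refine ⟨fun h => ?_, fun h x y => ?_⟩
  · ext i j
    simpa [mulVec_single, dotProduct, mul_apply] using h (Pi.single i 1) (Pi.single j 1)
  · rw [← vecMul_transpose, ← dotProduct_mulVec, mulVec_mulVec, h, zero_mulVec,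
      dotProduct_zero]

lemma two_mul_trace_mul_le_frobNorm_sq {Ωh Ω M : Matrix (Fin n) (Fin n) ℝ}
    (hΩh : Ωh.PosSemidef) (hM : M.IsHermitian) (hMΩh : M * Ωh = 0)
    (hnorm : opNorm M ≤ sv Ωh Ωh.rank) (hΩ : Ω.PosSemidef) (hrank : Ω.rank ≤ Ωh.rank) :
    2 * (M * Ω).trace ≤ frobNorm (Ωh - Ω) ^ 2 := by
  have hMσ : M ≤ sv Ωh Ωh.rank • 1 :=
    (le_opNorm_smul_one hM).trans (smul_le_smul_of_nonneg_right hnorm zero_le_one)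
  have hcross := trace_mul_le_mul_trace_mul_kerProj hΩh.1 hM hMΩh hMσ hΩ.nonneg
  have hquad := two_mul_trace_mul_kerProj_le hΩh.1 (sv_nonneg Ωh Ωh.rank)
    (fun x hx hx0 => sv_rank_le_of_mem_spectrum hΩh hx hx0) hΩ.nonneg hrank
  have hfrob : frobNorm (Ωh - Ω) ^ 2 = ((Ωh - Ω) * (Ωh - Ω)).trace := by
    rw [frobNorm_sq, minner, ← conjTranspose_eq_transpose_of_trivial, (hΩh.1.sub hΩ.1).eq]
  linarith

end Frobenius

end Matrix

theorem stmt5_general {n r : ℕ}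
    (Ωh Δ Λ : Matrix (Fin n) (Fin n) ℝ)
    (hΩ : Ωh.PosSemidef) (hrank : Ωh.rank = r)
    (hΔd : Δ.IsDiag) (hΔ0 : ∀ i, 0 ≤ Δ i i)
    (hΛs : Λ.IsSymm) (hΛ0 : ∀ i, Λ i i = 0)
    (hnorm : opNorm (Δ + Λ) < sv Ωh r) (horth : rangesOrth (Δ + Λ) Ωh) :
    Ωh.rank ≤ r ∧ Ωh.PosSemidef ∧
    ((Ωh + Δ) - Ωh).PosSemidef ∧ ((Ωh + Δ) - Ωh).IsDiag ∧
    frobNorm ((Ωh + Δ) - Ωh) ^ 2 = frobNorm Δ ^ 2 ∧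
    ∀ Ω : Matrix (Fin n) (Fin n) ℝ, Ω.rank ≤ r → Ω.PosSemidef →
      ((Ωh + Δ) - Ω).PosSemidef → ((Ωh + Δ) - Ω).IsDiag →
      frobNorm ((Ωh + Δ) - Ω) ^ 2 ≥ frobNorm ((Ωh + Δ) - Ωh) ^ 2 := by
  subst hrank
  rw [add_sub_cancel_left]
  have hΔ : Δ.PosSemidef := hΔd.diagonal_diag ▸ posSemidef_diagonal_iff.mpr hΔ0
  refine ⟨le_rfl, hΩ, hΔ, hΔd, rfl, fun Ω hΩrank hΩpsd _ hdiag => ?_⟩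
  have hM : (Δ + Λ).IsHermitian := hΔ.1.add (by simpa [IsHermitian] using hΛs.eq)
  have hMΩh : (Δ + Λ) * Ωh = 0 := by
    simpa [← conjTranspose_eq_transpose_of_trivial, hM.eq] using rangesOrth_iff.mp horth
  have hE : (Ωh - Ω).IsDiag := by
    have := hdiag.sub hΔd
    rwa [show Ωh + Δ - Ω - Δ = Ωh - Ω by abel] at this
  have hcross : minner Δ (Ωh - Ω) = -((Δ + Λ) * Ω).trace := by
    rw [← add_zero (minner Δ _), ← minner_eq_zero_of_isDiag hΛ0 hE, ← minner_add_left,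
      minner, ← conjTranspose_eq_transpose_of_trivial, hM.eq, Matrix.mul_sub, hMΩh, zero_sub,
      trace_neg]
  have key := two_mul_trace_mul_le_frobNorm_sq hΩ hM hMΩh hnorm.le hΩpsd hΩrank
  rw [show Ωh + Δ - Ω = Δ + (Ωh - Ω) by abel, frobNorm_add_sq, hcross]
  linarith

/-- If `Σ = Ωh + Δ > 0` with `Δ ∈ D_Ωh`, then `Ωh` solves the
reformulated Frisch–Kalman problem. -/
theorem stmt5 {n r : ℕ} (hrn : r < n)
    (Ωh Δ Λ : Matrix (Fin n) (Fin n) ℝ)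
    (hΩ : Ωh.PosSemidef) (hrank : Ωh.rank = r)
    (hΔd : Δ.IsDiag) (hΔ0 : ∀ i, 0 ≤ Δ i i)
    (hΛs : Λ.IsSymm) (hΛ0 : ∀ i, Λ i i = 0)
    (hnorm : opNorm (Δ + Λ) < sv Ωh r) (horth : rangesOrth (Δ + Λ) Ωh)
    (hPD : (Ωh + Δ).PosDef) :
    Ωh.rank ≤ r ∧ Ωh.PosSemidef ∧
    ((Ωh + Δ) - Ωh).PosSemidef ∧ ((Ωh + Δ) - Ωh).IsDiag ∧
    frobNorm ((Ωh + Δ) - Ωh) ^ 2 = frobNorm Δ ^ 2 ∧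
    ∀ Ω : Matrix (Fin n) (Fin n) ℝ, Ω.rank ≤ r → Ω.PosSemidef →
      ((Ωh + Δ) - Ω).PosSemidef → ((Ωh + Δ) - Ω).IsDiag →
      frobNorm ((Ωh + Δ) - Ω) ^ 2 ≥ frobNorm ((Ωh + Δ) - Ωh) ^ 2 :=
  stmt5_general Ωh Δ Λ hΩ hrank hΔd hΔ0 hΛs hΛ0 hnorm horth
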